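/- arXiv:1810.00789 — 5 statements merged into one kernel-verified Lean document; each statement's English description precedes it below -/
import Mathlib

section
/- Let G be a finite graph, let V_i ⊆ V_{i+1} be vertex subsets, and let v be a vertex with V_{i+1} \ V_i ⊆ N[v] and N[v] ∩ V_i = ∅. If D* is a minimal dominating set of G(V_i) that does not dominate V_{i+1}, then D* ∪ {v} is a minimal dominating set of G(V_{i+1}). -/
open Set

variable {V : Type*}

/-- The closed neighborhood of a set of vertices: `N[X]`. -/
def closedNbhd (G : SimpleGraph V) (X : Set V) : Set V :=
  {y | ∃ x ∈ X, y = x ∨ G.Adj x y}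

/-- `X` dominates `A` in `G`: `A ⊆ N[X]`. -/
def Dominates (G : SimpleGraph V) (X A : Set V) : Prop :=
  A ⊆ closedNbhd G X

/-- `X` is an inclusion-wise minimal set dominating `A` in `G`. -/
def MinDom (G : SimpleGraph V) (X A : Set V) : Prop :=
  Dominates G X A ∧ ∀ Y, Y ⊂ X → ¬ Dominates G Y A

/-- `S` is an independent set in `G`. -/
def IndepSet (G : SimpleGraph V) (S : Set V) : Prop :=
  S.Pairwise fun x y => ¬ G.Adj x y

section

variable {G : SimpleGraph V} {X Y S A B : Set V}

lemma closedNbhd_mono (h : X ⊆ Y) : closedNbhd G X ⊆ closedNbhd G Y :=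
  fun _ ⟨x, hx, hxy⟩ => ⟨x, h hx, hxy⟩

lemma Dominates.mono (hXY : X ⊆ Y) (hBA : B ⊆ A) (h : Dominates G X A) : Dominates G Y B :=
  hBA.trans (h.trans (closedNbhd_mono hXY))

lemma Dominates.union (hX : Dominates G X A) (hY : Dominates G Y B) :
    Dominates G (X ∪ Y) (A ∪ B) :=
  union_subset (hX.mono subset_union_left le_rfl) (hY.mono subset_union_right le_rfl)

lemma Dominates.diff_of_disjoint (h : Dominates G X A) (hS : Disjoint (closedNbhd G S) A) :
    Dominates G (X \ S) A := by
  intro a ha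
  obtain ⟨x, hx, hxa⟩ := h ha
  exact ⟨x, ⟨hx, fun hxS => hS.ne_of_mem ⟨x, hxS, hxa⟩ ha rfl⟩, hxa⟩

lemma MinDom.eq_of_subset (h : MinDom G X A) (hYX : Y ⊆ X) (hY : Dominates G Y A) : Y = X :=
  hYX.eq_or_ssubset.resolve_right fun hlt => h.2 Y hlt hY

end

theorem stmt_3_general (G : SimpleGraph V) (Vi Vi1 Dstar : Set V) (v : V)
    (h1 : Vi ⊆ Vi1)
    (h3 : Vi1 \ Vi ⊆ closedNbhd G {v})
    (h4 : closedNbhd G {v} ∩ Vi = ∅)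
    (h5 : MinDom G Dstar Vi) (h6 : ¬ Dominates G Dstar Vi1) :
    MinDom G (Dstar ∪ {v}) Vi1 := by
  have hv : Disjoint (closedNbhd G {v}) Vi := disjoint_iff_inter_eq_empty.2 h4
  refine ⟨(h5.1.union h3).mono le_rfl (by simp), fun Y hY hYdom => ?_⟩
  -- Removing `v` from `Y` keeps `Vi` dominated, so minimality of `Dstar` pins down `Y \ {v}`.
  have hDY : Y \ {v} = Dstar :=
    h5.eq_of_subset (sdiff_subset_iff.2 (union_comm Dstar {v} ▸ hY.1))
      ((hYdom.mono le_rfl h1).diff_of_disjoint hv)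
  by_cases hvY : v ∈ Y
  · exact hY.2 (union_subset (hDY ▸ sdiff_subset) (singleton_subset_iff.2 hvY))
  · exact h6 (by rwa [← hDY, sdiff_singleton_eq_self hvY])

theorem stmt_3 [Fintype V] (G : SimpleGraph V) (Vi Vi1 Dstar : Set V) (v : V)
    (h1 : Vi ⊆ Vi1)
    (h3 : Vi1 \ Vi ⊆ closedNbhd G {v})
    (h4 : closedNbhd G {v} ∩ Vi = ∅)
    (h5 : MinDom G Dstar Vi) (h6 : ¬ Dominates G Dstar Vi1) :
    MinDom G (Dstar ∪ {v}) Vi1 :=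
  stmt_3_general G Vi Vi1 Dstar v h1 h3 h4 h5 h6
end

section
/- Let H be a finite graph, B ⊆ V(H), and D ⊆ V(H). Then the number of minimal dominating sets of the bicolored graph H(B \ N[D]) is at most the number of minimal dominating sets of H(B). More precisely, the map sending X ∈ D(H, B \ N[D]) to any minimal dominating set of H(B) contained in D ∪ X is injective. -/
/-!
Every vertex `x` of a set `X` minimally dominating `B \ N[D]` has a private neighbour
`b ∈ B \ N[D]`. A set `F ⊆ D ∪ X` dominating `B` must dominate `b` from outside `D`, hence
from `x`; so `X ⊆ F`. As `X` misses `D`, this forces `F \ D = X`, i.e. `X` is recovered from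
`f X`.
-/

open Set

variable {V : Type*}

variable {G : SimpleGraph V}

lemma MinDom.exists_private_neighbor {X A : Set V} (h : MinDom G X A) {x : V} (hx : x ∈ X) :
    ∃ b ∈ A, (b = x ∨ G.Adj x b) ∧ b ∉ closedNbhd G (X \ {x}) := by
  have hsub : X \ {x} ⊂ X := sdiff_singleton_ssubset.mpr hx
  obtain ⟨b, hbA, hb⟩ := not_subset.mp (h.2 _ hsub)
  obtain ⟨z, hzX, hzb⟩ := h.1 hbA
  obtain rfl : z = x := by_contra fun hzx => hb ⟨z, ⟨hzX, hzx⟩, hzb⟩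
  exact ⟨b, hbA, hzb, hb⟩

lemma MinDom.disjoint_of_diff_closedNbhd {X B D : Set V}
    (h : MinDom G X (B \ closedNbhd G D)) : Disjoint X D := by
  refine disjoint_left.mpr fun x hxX hxD => ?_
  obtain ⟨b, hbA, hbx, -⟩ := h.exists_private_neighbor hxX
  exact hbA.2 ⟨x, hxD, hbx⟩

lemma MinDom.subset_of_dominates_of_subset_union {X B D F : Set V}
    (h : MinDom G X (B \ closedNbhd G D)) (hF : Dominates G F B) (hFsub : F ⊆ D ∪ X) :
    X ⊆ F := by
  intro x hx
  by_contra hxF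
  obtain ⟨b, hbA, -, hpriv⟩ := h.exists_private_neighbor hx
  obtain ⟨z, hzF, hzb⟩ := hF hbA.1
  rcases hFsub hzF with hzD | hzX
  · exact hbA.2 ⟨z, hzD, hzb⟩
  · exact hpriv ⟨z, ⟨hzX, fun hzx => hxF (hzx ▸ hzF)⟩, hzb⟩

lemma MinDom.diff_eq_of_dominates_of_subset_union {X B D F : Set V}
    (h : MinDom G X (B \ closedNbhd G D)) (hF : Dominates G F B) (hFsub : F ⊆ D ∪ X) :
    F \ D = X := by
  refine Subset.antisymm (sdiff_subset_iff.mpr hFsub) (subset_sdiff.mpr ⟨?_, ?_⟩)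
  · exact h.subset_of_dominates_of_subset_union hF hFsub
  · exact h.disjoint_of_diff_closedNbhd

theorem stmt_4 [Fintype V] (H : SimpleGraph V) (B D : Set V)
    (f : Set V → Set V)
    (hf : ∀ X, MinDom H X (B \ closedNbhd H D) → MinDom H (f X) B ∧ f X ⊆ D ∪ X) :
    Set.InjOn f {X | MinDom H X (B \ closedNbhd H D)} ∧
      {X | MinDom H X (B \ closedNbhd H D)}.ncard ≤ {X | MinDom H X B}.ncard := by
  have hrecover : ∀ X, MinDom H X (B \ closedNbhd H D) → f X \ D = X := fun X hX =>
    hX.diff_eq_of_dominates_of_subset_union (hf X hX).1.1 (hf X hX).2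
  have hinj : Set.InjOn f {X | MinDom H X (B \ closedNbhd H D)} := fun X hX Y hY hXY => by
    rw [← hrecover X hX, ← hrecover Y hY, hXY]
  exact ⟨hinj, ncard_le_ncard_of_injOn f (fun X hX => (hf X hX).1) hinj (toFinite _)⟩
end

section
/- Let H be a split graph whose vertex set is partitioned into an independent set S (taken inclusion-wise maximal) and a clique C. Then for every minimal dominating set D of H: (i) D ∩ S = S \ N(D ∩ C), and (ii) every x ∈ D has a private neighbor in S. -/
/-! Minimality gives each `x ∈ D` a vertex `w` not dominated by `D \ {x}`, necessarily in `N[x]`.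
If `w` lies in the clique `C`, maximality of `S` gives a neighbour `s ∈ S` of `w`; a vertex
dominating `s` is `s` itself or a clique vertex, and either would also dominate `w`, so `s` is a
private neighbour of `x` in `S`. For (i), a vertex of `D ∩ S` is then its own private neighbour,
so no vertex of `D ∩ C` is adjacent to it; conversely a vertex of `S` with no neighbour in
`D ∩ C` can only be dominated by itself. -/

open Set

variable {V : Type*}

section Domination

variable {G : SimpleGraph V}

theorem mem_closedNbhd_singleton {x y : V} : y ∈ closedNbhd G {x} ↔ y = x ∨ G.Adj x y := by
  simp [closedNbhd]

theorem MinDom.exists_notMem_closedNbhd_diff {D A : Set V} (hD : MinDom G D A) {x : V}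
    (hx : x ∈ D) : ∃ w ∈ A, w ∉ closedNbhd G (D \ {x}) :=
  not_subset.mp <| hD.2 _ <| sdiff_singleton_ssubset.mpr hx

theorem mem_closedNbhd_singleton_of_notMem_closedNbhd_diff {D : Set V} {x y : V}
    (hy : y ∈ closedNbhd G D) (hy' : y ∉ closedNbhd G (D \ {x})) : y ∈ closedNbhd G {x} := by
  obtain ⟨d, hdD, hdy⟩ := hy
  have hdx : d = x := by_contra fun hdx => hy' ⟨d, ⟨hdD, hdx⟩, hdy⟩
  exact ⟨x, rfl, hdx ▸ hdy⟩

end Domination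

section SplitGraph

variable {G : SimpleGraph V} {S C : Set V}

theorem IndepSet.eq_of_mem_closedNbhd_singleton (hS : IndepSet G S) {x y : V} (hx : x ∈ S)
    (hy : y ∈ S) (hxy : y ∈ closedNbhd G {x}) : y = x := by
  rcases mem_closedNbhd_singleton.mp hxy with rfl | hadj
  · rfl
  · exact absurd hadj (hS hx hy hadj.ne)

theorem IndepSet.mem_of_adj (hS : IndepSet G S) (hpart : S ∪ C = univ) {s v : V} (hs : s ∈ S)
    (hadj : G.Adj v s) : v ∈ C := by
  have hvS : v ∉ S := fun hv => hS hv hs hadj.ne hadj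
  exact (eq_univ_iff_forall.mp hpart v).resolve_left hvS

theorem IndepSet.exists_adj_of_maximal (hS : IndepSet G S)
    (hSmax : ∀ T, S ⊆ T → IndepSet G T → T = S) {w : V} (hw : w ∉ S) : ∃ s ∈ S, G.Adj w s := by
  by_contra! hno
  have hind : IndepSet G (insert w S) :=
    pairwise_insert.mpr ⟨hS, fun s hs _ => ⟨hno s hs, fun h => hno s hs h.symm⟩⟩
  exact hw (hSmax _ (subset_insert w S) hind ▸ mem_insert w S)

theorem notMem_closedNbhd_of_adj_of_notMem_closedNbhd (hS : IndepSet G S)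
    (hpart : S ∪ C = univ) (hC : G.IsClique C) {X : Set V} {w s : V} (hwC : w ∈ C)
    (hw : w ∉ closedNbhd G X) (hs : s ∈ S) (hws : G.Adj w s) : s ∉ closedNbhd G X := by
  rintro ⟨x, hxX, hsx | hxs⟩
  · exact hw ⟨x, hxX, Or.inr (hsx ▸ hws.symm)⟩
  · have hxC : x ∈ C := hS.mem_of_adj hpart hs hxs
    exact hw ⟨x, hxX, (eq_or_ne w x).imp id (hC hxC hwC ·.symm)⟩

theorem MinDom.exists_private_mem (hS : IndepSet G S) (hpart : S ∪ C = univ)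
    (hSmax : ∀ T, S ⊆ T → IndepSet G T → T = S) (hC : G.IsClique C) {D : Set V}
    (hD : MinDom G D univ) {x : V} (hx : x ∈ D) :
    ∃ y ∈ S, y ∈ closedNbhd G {x} ∧ y ∉ closedNbhd G (D \ {x}) := by
  obtain ⟨w, -, hw⟩ := hD.exists_notMem_closedNbhd_diff hx
  suffices ∃ y ∈ S, y ∉ closedNbhd G (D \ {x}) by
    obtain ⟨y, hyS, hy⟩ := this
    exact ⟨y, hyS, mem_closedNbhd_singleton_of_notMem_closedNbhd_diff (hD.1 (mem_univ y)) hy, hy⟩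
  by_cases hwS : w ∈ S
  · exact ⟨w, hwS, hw⟩
  · have hwC : w ∈ C := (eq_univ_iff_forall.mp hpart w).resolve_left hwS
    obtain ⟨s, hs, hws⟩ := hS.exists_adj_of_maximal hSmax hwS
    exact ⟨s, hs, notMem_closedNbhd_of_adj_of_notMem_closedNbhd hS hpart hC hwC hw hs hws⟩

theorem MinDom.inter_indep_eq_diff (hS : IndepSet G S) (hpart : S ∪ C = univ)
    (hSmax : ∀ T, S ⊆ T → IndepSet G T → T = S) (hC : G.IsClique C) {D : Set V}
    (hD : MinDom G D univ) : D ∩ S = S \ {y | ∃ x ∈ D ∩ C, G.Adj x y} := by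
  ext v
  constructor
  · rintro ⟨hvD, hvS⟩
    refine ⟨hvS, ?_⟩
    rintro ⟨x, ⟨hxD, -⟩, hxv⟩
    obtain ⟨y, hyS, hyv, hy⟩ := hD.exists_private_mem hS hpart hSmax hC hvD
    obtain rfl := hS.eq_of_mem_closedNbhd_singleton hvS hyS hyv
    exact hy ⟨x, ⟨hxD, hxv.ne⟩, Or.inr hxv⟩
  · rintro ⟨hvS, hno⟩
    obtain ⟨d, hdD, rfl | hdv⟩ := hD.1 (mem_univ v)
    · exact ⟨hdD, hvS⟩
    · exact (hno ⟨d, ⟨hdD, hS.mem_of_adj hpart hvS hdv⟩, hdv⟩).elim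

end SplitGraph

theorem stmt_6_general (H : SimpleGraph V) (S C : Set V)
    (hpart : S ∪ C = Set.univ)
    (hS : IndepSet H S) (hSmax : ∀ T, S ⊆ T → IndepSet H T → T = S)
    (hC : H.IsClique C)
    (D : Set V) (hD : MinDom H D Set.univ) :
    D ∩ S = S \ {y | ∃ x ∈ D ∩ C, H.Adj x y} ∧
      ∀ x ∈ D, ∃ y ∈ S, y ∈ closedNbhd H {x} ∧ y ∉ closedNbhd H (D \ {x}) :=
  ⟨hD.inter_indep_eq_diff hS hpart hSmax hC, fun _ hx => hD.exists_private_mem hS hpart hSmax hC hx⟩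

theorem stmt_6 [Fintype V] (H : SimpleGraph V) (S C : Set V)
    (hpart : S ∪ C = Set.univ) (hdisj : Disjoint S C)
    (hS : IndepSet H S) (hSmax : ∀ T, S ⊆ T → IndepSet H T → T = S)
    (hC : H.IsClique C)
    (D : Set V) (hD : MinDom H D Set.univ) :
    D ∩ S = S \ {y | ∃ x ∈ D ∩ C, H.Adj x y} ∧
      ∀ x ∈ D, ∃ y ∈ S, y ∈ closedNbhd H {x} ∧ y ∉ closedNbhd H (D \ {x}) :=
  stmt_6_general H S C hpart hS hSmax hC D hD
end

section
/- Let G be a finite graph, v a vertex, D* a set with v ∉ N[D*], S = T \ (N[D*] ∪ {v}) where T \ N[D*] ⊆ N[v] (so T \ N[D*] = S ∪ {v}). Then every inclusion-wise minimal set X dominating S ∪ {v} is of the form Q ∪ {w} for some w ∈ N[v] ∩ X and some inclusion-wise minimal set Q dominating S \ N[w]. -/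
open Set

variable {V : Type*}

section Domination

variable {G : SimpleGraph V}

theorem mem_closedNbhd_singleton_comm {x y : V} :
    y ∈ closedNbhd G {x} ↔ x ∈ closedNbhd G {y} := by
  simp only [mem_closedNbhd_singleton, eq_comm, G.adj_comm]

theorem closedNbhd_union (X Y : Set V) :
    closedNbhd G (X ∪ Y) = closedNbhd G X ∪ closedNbhd G Y := by
  ext
  simp only [closedNbhd, mem_union, mem_ofPred_eq, or_and_right, exists_or]

theorem Dominates.diff_singleton {X A : Set V} (hX : Dominates G X A) (w : V) :
    Dominates G (X \ {w}) (A \ closedNbhd G {w}) := by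
  rintro a ⟨ha, haw⟩
  obtain ⟨x, hx, hxa⟩ := hX ha
  refine ⟨x, ⟨hx, ?_⟩, hxa⟩
  rintro rfl
  exact haw ⟨x, rfl, hxa⟩

theorem Dominates.union_singleton {Q A : Set V} {w : V}
    (hQ : Dominates G Q (A \ closedNbhd G {w})) : Dominates G (Q ∪ {w}) A := by
  rw [Dominates, closedNbhd_union, union_comm]
  exact sdiff_subset_iff.mp hQ

/-- A smaller set `Y` dominating `A \ N[w]` would make `Y ∪ {w}` a smaller dominating set
of `A`. -/
theorem MinDom.diff_singleton {X A : Set V} (hX : MinDom G X A) {w : V} (hw : w ∈ X) :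
    MinDom G (X \ {w}) (A \ closedNbhd G {w}) := by
  refine ⟨hX.1.diff_singleton w, fun Y hY hYdom => hX.2 (Y ∪ {w}) ?_ hYdom.union_singleton⟩
  calc Y ∪ {w} ⊂ X \ {w} ∪ {w} :=
        sup_lt_sup_of_lt_of_inf_le_inf hY fun a ha => absurd ha.2 ha.1.2
    _ = X := sdiff_union_of_subset (singleton_subset_iff.mpr hw)

end Domination

theorem stmt_10_general (G : SimpleGraph V) (v : V) (S X : Set V)
    (hX : MinDom G X (S ∪ {v})) :
    ∃ w ∈ closedNbhd G {v} ∩ X, ∃ Q,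
      MinDom G Q (S \ closedNbhd G {w}) ∧ X = Q ∪ {w} := by
  obtain ⟨w, hwX, hwv⟩ := hX.1 (mem_union_right S rfl)
  have hvw : v ∈ closedNbhd G {w} := ⟨w, rfl, hwv⟩
  have hdiff : (S ∪ {v}) \ closedNbhd G {w} = S \ closedNbhd G {w} := by
    rw [union_sdiff_distrib, sdiff_eq_empty.mpr (singleton_subset_iff.mpr hvw), union_empty]
  refine ⟨w, ⟨mem_closedNbhd_singleton_comm.mp hvw, hwX⟩, X \ {w}, ?_, ?_⟩
  · exact hdiff ▸ hX.diff_singleton hwX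
  · exact (sdiff_union_of_subset (singleton_subset_iff.mpr hwX)).symm

theorem stmt_10 [Fintype V] (G : SimpleGraph V) (v : V) (Dstar T S X : Set V)
    (hv : v ∉ closedNbhd G Dstar)
    (hT : T \ closedNbhd G Dstar ⊆ closedNbhd G {v})
    (hSdef : S = T \ (closedNbhd G Dstar ∪ {v}))
    (hX : MinDom G X (S ∪ {v})) :
    ∃ w ∈ closedNbhd G {v} ∩ X, ∃ Q,
      MinDom G Q (S \ closedNbhd G {w}) ∧ X = Q ∪ {w} :=
  stmt_10_general G v S X hX
end

section
/- Let G be a finite paw-free graph, v a vertex, and S ⊆ N(v) such that G[S] contains at least one edge, with complete multipartition S = I_1 ∪ … ∪ I_q (each I_j independent, all edges between distinct parts present). Let u ∉ S ∪ {v} be a vertex with a neighbor in S. If u is not adjacent to v, then u is adjacent to every vertex of S. If u is adjacent to v, then u is adjacent to every vertex of S \ I_j for some j. -/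
open Set

variable {V : Type*}

/-- `G` contains no induced paw (triangle `abc` plus pendant vertex `d` attached to `a`). -/
def PawFree (G : SimpleGraph V) : Prop :=
  ¬ ∃ a b c d : V, a ≠ b ∧ a ≠ c ∧ a ≠ d ∧ b ≠ c ∧ b ≠ d ∧ c ≠ d ∧
    G.Adj a b ∧ G.Adj a c ∧ G.Adj b c ∧ G.Adj a d ∧ ¬ G.Adj b d ∧ ¬ G.Adj c d

/-!
Both claims come from the same observation: if `abc` is a triangle and `d` is a further neighbour
of `a`, paw-freeness forces `d` to be adjacent to `b` or `c`. If `u ≁ v`, apply it to the triangles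
`v a b` with `a ∈ S` a neighbour of `u` and `ab` an edge of `G[S]`: the neighbours of `u` in `S`
are closed under adjacency in `G[S]`, which is connected because it is complete multipartite with
an edge. If `u ∼ v` and `t ∈ I_j` is a non-neighbour of `u`, apply it to the triangles `v t s` with
`s ∈ S \ I_j`.
-/

section

variable {G : SimpleGraph V}

theorem PawFree.adj_or_adj_of_triangle (h : PawFree G) {a b c d : V} (hab : G.Adj a b)
    (hac : G.Adj a c) (hbc : G.Adj b c) (had : G.Adj a d) (hbd : b ≠ d) (hcd : c ≠ d) :
    G.Adj b d ∨ G.Adj c d := by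
  by_contra! hnd
  exact h ⟨a, b, c, d, hab.ne, hac.ne, had.ne, hbc.ne, hbd, hcd, hab, hac, hbc, had, hnd.1, hnd.2⟩

variable {ι : Type*} {I : ι → Set V}

theorem adj_or_adj_of_mem_iUnion (hindep : ∀ j, IndepSet G (I j))
    (hcross : ∀ j k, j ≠ k → ∀ x ∈ I j, ∀ y ∈ I k, G.Adj x y) {x y b : V}
    (hx : x ∈ ⋃ j, I j) (hy : y ∈ ⋃ j, I j) (hb : b ∈ ⋃ j, I j) (hxy : G.Adj x y) :
    G.Adj b x ∨ G.Adj b y := by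
  obtain ⟨j, hbj⟩ := mem_iUnion.1 hb
  obtain ⟨k, hxk⟩ := mem_iUnion.1 hx
  obtain ⟨l, hyl⟩ := mem_iUnion.1 hy
  by_cases hjk : j = k
  · by_cases hjl : j = l
    · subst hjk hjl
      exact absurd hxy (hindep j hxk hyl hxy.ne)
    · exact Or.inr (hcross j l hjl b hbj y hyl)
  · exact Or.inl (hcross j k hjk b hbj x hxk)

variable {v u : V} {S : Set V}

theorem PawFree.forall_adj_of_not_adj_center (h : PawFree G) (hS : S ⊆ G.neighborSet v)
    (hcover : S ⊆ ⋃ j, I j) (hindep : ∀ j, IndepSet G (I j))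
    (hcross : ∀ j k, j ≠ k → ∀ x ∈ I j, ∀ y ∈ I k, G.Adj x y)
    (hedge : ∃ x ∈ S, ∃ y ∈ S, G.Adj x y) (huS : u ∉ S) (huv : u ≠ v)
    (hnb : ∃ s ∈ S, G.Adj u s) (hnadj : ¬ G.Adj u v) : ∀ s ∈ S, G.Adj u s := by
  have step : ∀ a ∈ S, G.Adj u a → ∀ b ∈ S, G.Adj a b → G.Adj u b := fun a ha hua b hb hab =>
    ((h.adj_or_adj_of_triangle hab (hS ha).symm (hS hb).symm hua.symm
      (ne_of_mem_of_not_mem hb huS) huv.symm).resolve_right fun hvu => hnadj hvu.symm).symm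
  obtain ⟨x, hx, y, hy, hxy⟩ := hedge
  have hdom : ∀ b ∈ S, G.Adj b x ∨ G.Adj b y := fun b hb =>
    adj_or_adj_of_mem_iUnion hindep hcross (hcover hx) (hcover hy) (hcover hb) hxy
  obtain ⟨s₀, hs₀, hus₀⟩ := hnb
  have hux_uy : G.Adj u x ∧ G.Adj u y := by
    rcases hdom s₀ hs₀ with hs₀x | hs₀y
    · have hux := step s₀ hs₀ hus₀ x hx hs₀x
      exact ⟨hux, step x hx hux y hy hxy⟩
    · have huy := step s₀ hs₀ hus₀ y hy hs₀y
      exact ⟨step y hy huy x hx hxy.symm, huy⟩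
  intro s hs
  rcases hdom s hs with hsx | hsy
  · exact step x hx hux_uy.1 s hs hsx.symm
  · exact step y hy hux_uy.2 s hs hsy.symm

theorem PawFree.exists_forall_adj_diff_of_adj_center (h : PawFree G) (hS : S ⊆ G.neighborSet v)
    (hcover : S ⊆ ⋃ j, I j) (hcross : ∀ j k, j ≠ k → ∀ x ∈ I j, ∀ y ∈ I k, G.Adj x y)
    (hSne : S.Nonempty) (huS : u ∉ S) (hadj : G.Adj u v) :
    ∃ j, ∀ s ∈ S \ I j, G.Adj u s := by
  by_cases hall : ∀ s ∈ S, G.Adj u s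
  · obtain ⟨j, -⟩ := mem_iUnion.1 (hcover hSne.some_mem)
    exact ⟨j, fun s hs => hall s hs.1⟩
  push Not at hall
  obtain ⟨t, ht, hut⟩ := hall
  obtain ⟨j, htj⟩ := mem_iUnion.1 (hcover ht)
  refine ⟨j, fun s ⟨hs, hsj⟩ => ?_⟩
  obtain ⟨k, hsk⟩ := mem_iUnion.1 (hcover hs)
  have hts : G.Adj t s := hcross j k (fun hjk => hsj (hjk ▸ hsk)) t htj s hsk
  have := h.adj_or_adj_of_triangle (hS ht) (hS hs) hts hadj.symm
    (ne_of_mem_of_not_mem ht huS) (ne_of_mem_of_not_mem hs huS)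
  exact (this.resolve_left fun htu => hut htu.symm).symm

end

theorem stmt_15_general (G : SimpleGraph V) (h : PawFree G) (v : V)
    (S : Set V) (hS : S ⊆ G.neighborSet v)
    {ι : Type*} (I : ι → Set V)
    (hcover : S = ⋃ j, I j)
    (hindep : ∀ j, IndepSet G (I j))
    (hcross : ∀ j k, j ≠ k → ∀ x ∈ I j, ∀ y ∈ I k, G.Adj x y)
    (hedge : ∃ x ∈ S, ∃ y ∈ S, G.Adj x y)
    (u : V) (huS : u ∉ S) (huv : u ≠ v) (hnb : ∃ s ∈ S, G.Adj u s) :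
    (¬ G.Adj u v → ∀ s ∈ S, G.Adj u s) ∧
      (G.Adj u v → ∃ j, ∀ s ∈ S \ I j, G.Adj u s) := by
  exact ⟨h.forall_adj_of_not_adj_center hS hcover.subset hindep hcross hedge huS huv hnb,
    h.exists_forall_adj_diff_of_adj_center hS hcover.subset hcross (hnb.imp fun _ => And.left) huS⟩

theorem stmt_15 [Fintype V] (G : SimpleGraph V) (h : PawFree G) (v : V)
    (S : Set V) (hS : S ⊆ G.neighborSet v)
    {ι : Type*} (I : ι → Set V)
    (hcover : S = ⋃ j, I j)
    (hindep : ∀ j, IndepSet G (I j))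
    (hcross : ∀ j k, j ≠ k → ∀ x ∈ I j, ∀ y ∈ I k, G.Adj x y)
    (hedge : ∃ x ∈ S, ∃ y ∈ S, G.Adj x y)
    (u : V) (huS : u ∉ S) (huv : u ≠ v) (hnb : ∃ s ∈ S, G.Adj u s) :
    (¬ G.Adj u v → ∀ s ∈ S, G.Adj u s) ∧
      (G.Adj u v → ∃ j, ∀ s ∈ S \ I j, G.Adj u s) :=
  stmt_15_general G h v S hS I hcover hindep hcross hedge u huS huv hnb
end
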